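/- arXiv:1401.0062 — 2 statements merged into one kernel-verified Lean document; each statement's English description precedes it below -/
import Mathlib

section
/- For all real numbers r > 0 and θ > 0, ∑_{w=0}^∞ ((w+r)/(w+1)) · BNB(w; r, 1, θ) = θ(ψ(r+θ) − ψ(θ)). (This is the total acceptance probability, scaled by max{r,1}, of the rejection sampler for the digamma distribution that proposes W ~ BNB(r, 1, θ) and accepts with probability ((W+r)/(W+1))/max{r,1}; consequently the per-trial acceptance probability equals θ[ψ(r+θ) − ψ(θ)]/max{r,1}.) -/
open scoped BigOperators

/-- Rising factorial `(a)_z = a(a+1)⋯(a+z-1)`. -/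
noncomputable def risingFac (a : ℝ) (z : ℕ) : ℝ := ∏ i ∈ Finset.range z, (a + i)

/-- Digamma function `ψ(x) = Γ'(x)/Γ(x)`. -/
noncomputable def psi (x : ℝ) : ℝ := deriv Real.Gamma x / Real.Gamma x

/-- Beta function `B(α,β) = Γ(α)Γ(β)/Γ(α+β)`. -/
noncomputable def betaFn (a b : ℝ) : ℝ := Real.Gamma a * Real.Gamma b / Real.Gamma (a + b)

/-- Probability mass function of the beta negative binomial distribution. -/
noncomputable def BNBpmf (r α β : ℝ) (z : ℕ) : ℝ :=
  (risingFac r z / z.factorial) * (betaFn (z + α) (r + β) / betaFn α β)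

/-!
With `B(1, θ) = 1/θ` and `B(w+1, r+θ) = w!/(r+θ)_{w+1}`, the `w`-th summand is `θ` times
`(a)_{w+1} / ((w+1) (b)_{w+1})` for `a = r`, `b = r + θ`, so it suffices to show that these terms
sum to `ψ(b) - ψ(b-a)` whenever `0 < a < b`. Call that sum `S(b)`. Replacing `b` by `b + 1`
telescopes: `S(b) - S(b+1) = 1/(b-a) - 1/b`, which by `ψ(x+1) = ψ(x) + 1/x` is also the change of
`ψ(b) - ψ(b-a)`. So the difference of the two sides is unchanged along `b, b+1, b+2, …`, and it
tends to `0` there: `S(b+N) ≤ b/(b+N) · S(b)`, while `0 ≤ ψ(b+N) - ψ(b-a+N) ≤ ⌈a⌉/(b-a+N)`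
because `ψ` is increasing (`log Γ` is convex). Summability and the decay of `(a)_n/(b)_n` needed
for the telescoping come from Euler's limit formula, which gives `(a)_n/(b)_n = O(n^(a-b))`.
-/

open Filter Topology Asymptotics Finset

lemma risingFac_succ (a : ℝ) (n : ℕ) : risingFac a (n + 1) = risingFac a n * (a + n) :=
  prod_range_succ _ _

lemma risingFac_succ' (a : ℝ) (n : ℕ) : risingFac a (n + 1) = a * risingFac (a + 1) n := by
  simp only [risingFac, prod_range_succ', Nat.cast_zero, add_zero, Nat.cast_succ, add_assoc,
    add_comm (1 : ℝ)]
  ring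

lemma risingFac_pos {a : ℝ} (ha : 0 < a) (n : ℕ) : 0 < risingFac a n :=
  prod_pos fun _ _ => by positivity

lemma risingFac_le_risingFac {a b : ℝ} (ha : 0 ≤ a) (hab : a ≤ b) (n : ℕ) :
    risingFac a n ≤ risingFac b n :=
  prod_le_prod (fun _ _ => by positivity) fun _ _ => by linarith

lemma mul_risingFac_succ_le {b c : ℝ} (hb : 0 < b) (hbc : b ≤ c) (n : ℕ) :
    c * risingFac b (n + 1) ≤ b * risingFac c (n + 1) := by
  rw [risingFac_succ', risingFac_succ', mul_left_comm]
  have := risingFac_le_risingFac (a := b + 1) (b := c + 1) (by linarith) (by linarith) n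
  gcongr
  linarith

lemma Gamma_add_nat {x : ℝ} (hx : 0 < x) (n : ℕ) :
    Real.Gamma (x + n) = risingFac x n * Real.Gamma x := by
  induction n with
  | zero => simp [risingFac]
  | succ n ih =>
    rw [Nat.cast_succ, ← add_assoc, Real.Gamma_add_one (by positivity), ih, risingFac_succ]
    ring

lemma betaFn_one_left {θ : ℝ} (hθ : 0 < θ) : betaFn 1 θ = θ⁻¹ := by
  rw [betaFn, Real.Gamma_one, add_comm, Real.Gamma_add_one hθ.ne']
  field_simp [(Real.Gamma_pos_of_pos hθ).ne']

lemma betaFn_nat_add_one_left {b : ℝ} (hb : 0 < b) (n : ℕ) :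
    betaFn (n + 1) b = n.factorial / risingFac b (n + 1) := by
  rw [betaFn, Real.Gamma_nat_eq_factorial, add_right_comm, add_comm _ b, add_assoc,
    ← Nat.cast_succ, Gamma_add_nat hb]
  field_simp [(Real.Gamma_pos_of_pos hb).ne', (risingFac_pos hb (n + 1)).ne']

lemma isBigO_risingFac_div_risingFac {a b : ℝ} (ha : 0 < a) (hb : 0 < b) :
    (fun n : ℕ => risingFac a (n + 1) / risingFac b (n + 1)) =O[atTop]
      fun n => (n : ℝ) ^ (a - b) := by
  have hlim : Tendsto (fun n => Real.GammaSeq b n / Real.GammaSeq a n) atTop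
      (𝓝 (Real.Gamma b / Real.Gamma a)) :=
    (Real.GammaSeq_tendsto_Gamma b).div (Real.GammaSeq_tendsto_Gamma a)
      (Real.Gamma_pos_of_pos ha).ne'
  have heq : (fun n : ℕ => (n : ℝ) ^ (a - b) * (Real.GammaSeq b n / Real.GammaSeq a n))
      =ᶠ[atTop] fun n => risingFac a (n + 1) / risingFac b (n + 1) := by
    filter_upwards [eventually_ne_atTop 0] with n hn
    have hn' : (0 : ℝ) < n := by positivity
    -- `Real.GammaSeq s n = n ^ s * n! / (s)_{n+1}`
    unfold risingFac
    simp only [Real.GammaSeq, Real.rpow_sub hn']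
    field_simp [(risingFac_pos ha (n + 1)).ne', (risingFac_pos hb (n + 1)).ne',
      (Real.rpow_pos_of_pos hn' a).ne', (Real.rpow_pos_of_pos hn' b).ne', Nat.factorial_ne_zero]
  simpa using heq.symm.trans_isBigO ((isBigO_refl _ _).mul (hlim.isBigO_one ℝ))

lemma psi_eq_logDeriv : psi = logDeriv Real.Gamma := rfl

lemma differentiableAt_Gamma_of_pos {x : ℝ} (hx : 0 < x) : DifferentiableAt ℝ Real.Gamma x :=
  Real.differentiableAt_Gamma fun m => by linarith [m.cast_nonneg (α := ℝ)]

lemma psi_add_one {x : ℝ} (hx : 0 < x) : psi (x + 1) = psi x + 1 / x := by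
  have hshift : Real.Gamma ∘ (· + 1) =ᶠ[𝓝 x] fun y => y * Real.Gamma y := by
    filter_upwards [lt_mem_nhds hx] with y hy
    exact Real.Gamma_add_one hy.ne'
  have hcomp : logDeriv (fun y => y * Real.Gamma y) x = psi (x + 1) := by
    rw [← (logDeriv_congr_nhds hshift).eq_of_nhds, logDeriv_comp (g := (· + 1))
      (differentiableAt_Gamma_of_pos (by linarith)) (differentiableAt_id.add_const (1 : ℝ))]
    simp [psi_eq_logDeriv]
  rw [← hcomp, logDeriv_mul (f := fun y => y) x hx.ne' (Real.Gamma_pos_of_pos hx).ne'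
    differentiableAt_id (differentiableAt_Gamma_of_pos hx), logDeriv_id', psi_eq_logDeriv,
    add_comm]

lemma psi_add_nat {x : ℝ} (hx : 0 < x) (n : ℕ) :
    psi (x + n) = psi x + ∑ i ∈ range n, 1 / (x + i) := by
  induction n with
  | zero => simp
  | succ n ih =>
    rw [Nat.cast_succ, ← add_assoc, psi_add_one (by positivity), ih, sum_range_succ, add_assoc]

lemma psi_monotoneOn : MonotoneOn psi (Set.Ioi 0) := by
  have hderiv {x : ℝ} (hx : 0 < x) : deriv (Real.log ∘ Real.Gamma) x = psi x :=
    Real.deriv_log_comp_eq_logDeriv (differentiableAt_Gamma_of_pos hx)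
      (Real.Gamma_pos_of_pos hx).ne'
  intro x hx y hy hxy
  rw [← hderiv hx, ← hderiv hy]
  refine Real.convexOn_log_Gamma.monotoneOn_deriv (fun z hz => ?_) hx hy hxy
  exact (differentiableAt_Gamma_of_pos hz).log (Real.Gamma_pos_of_pos hz).ne'

lemma psi_sub_psi_le {x y : ℝ} (hx : 0 < x) (hxy : x ≤ y) :
    psi y - psi x ≤ ⌈y - x⌉₊ / x := by
  have hy : psi y ≤ psi (x + ⌈y - x⌉₊) :=
    psi_monotoneOn (hx.trans_le hxy) (by simp only [Set.mem_Ioi]; positivity)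
      (by linarith [Nat.le_ceil (y - x)])
  have hsum : ∑ i ∈ range ⌈y - x⌉₊, 1 / (x + i) ≤ ⌈y - x⌉₊ / x := by
    calc ∑ i ∈ range ⌈y - x⌉₊, 1 / (x + i) ≤ ∑ _i ∈ range ⌈y - x⌉₊, 1 / x :=
          sum_le_sum fun i _ => one_div_le_one_div_of_le hx (by simp)
      _ = ⌈y - x⌉₊ / x := by simp [div_eq_mul_inv]
  rw [psi_add_nat hx] at hy
  linarith

lemma tendsto_psi_add_nat_sub_psi_add_nat {x y : ℝ} (hx : 0 < x) (hxy : x ≤ y) :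
    Tendsto (fun N : ℕ => psi (y + N) - psi (x + N)) atTop (𝓝 0) := by
  have hxN (N : ℕ) : 0 < x + N := by positivity
  refine squeeze_zero (fun N => sub_nonneg.2 (psi_monotoneOn (hxN N)
      (by simp only [Set.mem_Ioi]; linarith [hxN N]) (by linarith)))
    (fun N => (psi_sub_psi_le (hxN N) (by linarith)).trans_eq (by rw [add_sub_add_right_eq_sub]))
    ?_
  exact tendsto_const_nhds.div_atTop (tendsto_atTop_add_const_left _ x tendsto_natCast_atTop_atTop)

noncomputable def psiDiffTerm (a b : ℝ) (k : ℕ) : ℝ :=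
  risingFac a (k + 1) / ((k + 1) * risingFac b (k + 1))

section psiDiffTerm

variable {a b : ℝ}

lemma psiDiffTerm_nonneg (ha : 0 < a) (hb : 0 < b) (k : ℕ) : 0 ≤ psiDiffTerm a b k := by
  have := risingFac_pos ha (k + 1)
  have := risingFac_pos hb (k + 1)
  unfold psiDiffTerm
  positivity

lemma isBigO_psiDiffTerm (ha : 0 < a) (hb : 0 < b) :
    psiDiffTerm a b =O[atTop] fun n => (n : ℝ) ^ (a - b - 1) := by
  have hinv : (fun n : ℕ => ((n : ℝ) + 1)⁻¹) =O[atTop] fun n => (n : ℝ)⁻¹ :=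
    IsBigO.of_bound 1 <| by
      filter_upwards [eventually_gt_atTop 0] with n hn
      have hn' : (0 : ℝ) < n := by exact_mod_cast hn
      rw [norm_inv, norm_inv, one_mul, Real.norm_of_nonneg (by positivity),
        Real.norm_of_nonneg hn'.le]
      exact inv_anti₀ hn' (by linarith)
  refine ((isBigO_risingFac_div_risingFac ha hb).mul hinv).congr' ?_ ?_
  · exact .of_eq (funext fun n => by unfold psiDiffTerm; field_simp)
  · filter_upwards [eventually_ne_atTop 0] with n hn
    rw [Real.rpow_sub_one (by exact_mod_cast hn), div_eq_mul_inv]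

lemma summable_psiDiffTerm (ha : 0 < a) (hab : a < b) : Summable (psiDiffTerm a b) :=
  summable_of_isBigO_nat' (Real.summable_nat_rpow.2 (by linarith))
    (isBigO_psiDiffTerm ha (ha.trans hab))

lemma psiDiffTerm_sub_psiDiffTerm_add_one (hb : 0 < b) (hab : a ≠ b) (k : ℕ) :
    psiDiffTerm a b k - psiDiffTerm a (b + 1) k =
      (risingFac a (k + 1) / risingFac b (k + 1) - risingFac a (k + 2) / risingFac b (k + 2)) /
        (b - a) := by
  have hb' := risingFac_pos (show 0 < b + 1 by linarith) k
  have hba : b - a ≠ 0 := sub_ne_zero.2 hab.symm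
  unfold psiDiffTerm
  rw [risingFac_succ a (k + 1), risingFac_succ b (k + 1), risingFac_succ' b k,
    risingFac_succ (b + 1) k]
  push_cast
  field_simp
  ring

lemma hasSum_psiDiffTerm_sub_psiDiffTerm_add_one (ha : 0 < a) (hab : a < b) :
    HasSum (fun k => psiDiffTerm a b k - psiDiffTerm a (b + 1) k) (1 / (b - a) - 1 / b) := by
  have hb : 0 < b := ha.trans hab
  rw [((summable_psiDiffTerm ha hab).sub
    (summable_psiDiffTerm ha (by linarith))).hasSum_iff_tendsto_nat]
  simp_rw [psiDiffTerm_sub_psiDiffTerm_add_one hb hab.ne, ← sum_div, sum_range_sub']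
  have hpow : Tendsto (fun n : ℕ => (n : ℝ) ^ (a - b)) atTop (𝓝 0) := by
    simpa [neg_sub, Function.comp_def] using
      (tendsto_rpow_neg_atTop (sub_pos.2 hab)).comp tendsto_natCast_atTop_atTop
  have hratio := (isBigO_risingFac_div_risingFac ha hb).trans_tendsto hpow
  convert (tendsto_const_nhds.sub hratio).div_const (b - a) using 2
  simp [risingFac]
  field_simp [hb.ne', (sub_pos.2 hab).ne']
  ring

lemma psiDiffTerm_le {c : ℝ} (ha : 0 < a) (hb : 0 < b) (hbc : b ≤ c) (k : ℕ) :
    psiDiffTerm a c k ≤ b / c * psiDiffTerm a b k := by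
  have hc : 0 < c := hb.trans_le hbc
  have hA := risingFac_pos ha (k + 1)
  have hB := risingFac_pos hb (k + 1)
  have hC := risingFac_pos hc (k + 1)
  have key := mul_le_mul_of_nonneg_left (mul_risingFac_succ_le hb hbc k)
    (show 0 ≤ risingFac a (k + 1) * (k + 1) by positivity)
  unfold psiDiffTerm
  rw [div_mul_div_comm, div_le_div_iff₀ (by positivity) (by positivity)]
  linarith

lemma tendsto_tsum_psiDiffTerm_add_nat (ha : 0 < a) (hab : a < b) :
    Tendsto (fun N : ℕ => ∑' k, psiDiffTerm a (b + N) k) atTop (𝓝 0) := by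
  have hb : 0 < b := ha.trans hab
  have hsum := summable_psiDiffTerm ha hab
  have hbN (N : ℕ) : b ≤ b + N := le_add_of_nonneg_right N.cast_nonneg
  have hbound (N : ℕ) :
      ∑' k, psiDiffTerm a (b + N) k ≤ b / (b + N) * ∑' k, psiDiffTerm a b k := by
    rw [← tsum_mul_left]
    exact (summable_psiDiffTerm ha (hab.trans_le (hbN N))).tsum_le_tsum
      (psiDiffTerm_le ha hb (hbN N)) (hsum.mul_left _)
  refine squeeze_zero (fun N => tsum_nonneg (psiDiffTerm_nonneg ha (hb.trans_le (hbN N))))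
    hbound ?_
  simpa using (tendsto_const_nhds.div_atTop
    (tendsto_atTop_add_const_left _ b tendsto_natCast_atTop_atTop)).mul_const
    (∑' k, psiDiffTerm a b k)

theorem hasSum_psiDiffTerm (ha : 0 < a) (hab : a < b) :
    HasSum (psiDiffTerm a b) (psi b - psi (b - a)) := by
  let D : ℕ → ℝ := fun N => ∑' k, psiDiffTerm a (b + N) k - (psi (b + N) - psi (b - a + N))
  have hD (N : ℕ) : D N = D 0 := by
    induction N with
    | zero => rfl
    | succ N ih =>
      have hbN : a < b + N := hab.trans_le (le_add_of_nonneg_right N.cast_nonneg)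
      have hstep := ((summable_psiDiffTerm ha hbN).hasSum.sub
        (summable_psiDiffTerm ha (by linarith)).hasSum).unique
        (hasSum_psiDiffTerm_sub_psiDiffTerm_add_one ha hbN)
      rw [← ih]
      simp only [D, Nat.cast_succ, ← add_assoc]
      rw [psi_add_one (by linarith), psi_add_one (by linarith), sub_add_eq_add_sub]
      linarith
  have hlim : Tendsto D atTop (𝓝 0) := by
    simpa using (tendsto_tsum_psiDiffTerm_add_nat ha hab).sub
      (tendsto_psi_add_nat_sub_psi_add_nat (sub_pos.2 hab) (sub_le_self b ha.le))
  have hD0 : D 0 = 0 := tendsto_nhds_unique (tendsto_const_nhds.congr fun N => (hD N).symm) hlim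
  simp only [D, Nat.cast_zero, add_zero, sub_eq_zero] at hD0
  exact hD0 ▸ (summable_psiDiffTerm ha hab).hasSum

end psiDiffTerm

lemma div_mul_BNBpmf_one_left {r θ : ℝ} (hθ : 0 < θ) (hrθ : 0 < r + θ) (w : ℕ) :
    ((w : ℝ) + r) / ((w : ℝ) + 1) * BNBpmf r 1 θ w = θ * psiDiffTerm r (r + θ) w := by
  have := risingFac_pos hrθ (w + 1)
  rw [BNBpmf, betaFn_one_left hθ, betaFn_nat_add_one_left hrθ, psiDiffTerm, risingFac_succ r w]
  field_simp [Nat.factorial_ne_zero]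
  ring

theorem stmt_3 (r θ : ℝ) (hr : 0 < r) (hθ : 0 < θ) :
    HasSum (fun w : ℕ => (((w : ℝ) + r) / ((w : ℝ) + 1)) * BNBpmf r 1 θ w)
      (θ * (psi (r + θ) - psi θ)) := by
  have h := (hasSum_psiDiffTerm hr (lt_add_of_pos_right r hθ)).mul_left θ
  rw [add_sub_cancel_left] at h
  simpa only [div_mul_BNBpmf_one_left hθ (add_pos hr hθ)] using h
end

section
/- For all real numbers r > 0, α > 0, β > 0 and all t ≥ 0, the Laplace transform of the beta negative binomial distribution satisfies ∑_{z=0}^∞ e^{−tz} · BNB(z; r, α, β) = ∫₀¹ ((1−p)/(1−p·e^{−t}))^r · p^{α−1}(1−p)^{β−1}/B(α, β) dp. -/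
open scoped BigOperators
open MeasureTheory

/-! Given `p`, the negative binomial series `∑ (r)_z / z! · x^z = (1 - x)^(-r)` at `x = p e^{-t}`
shows that `∑ e^{-tz} (r)_z / z! · p^z (1 - p)^r = ((1 - p) / (1 - p e^{-t}))^r`. Integrating term by
term against `p^(α-1) (1-p)^(β-1)`, which is legitimate because every term is nonnegative, turns the
`z`-th term into `e^{-tz} (r)_z / z! · B(z + α, r + β)` by Euler's beta integral. -/

lemma risingFac_eq_ascPochhammer_eval (a : ℝ) (z : ℕ) :
    risingFac a z = (ascPochhammer ℝ z).eval a := by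
  induction z with
  | zero => simp [risingFac]
  | succ n ih => simp [risingFac, Finset.prod_range_succ, ascPochhammer_succ_right, ← ih]

lemma risingFac_nonneg {a : ℝ} (ha : 0 ≤ a) (z : ℕ) : 0 ≤ risingFac a z :=
  Finset.prod_nonneg fun i _ => by positivity

lemma risingFac_div_factorial (a : ℝ) (z : ℕ) :
    risingFac a z / z.factorial = Ring.choose (a + z - 1) z := by
  rw [← Ring.multichoose_eq, eq_comm, eq_div_iff (by positivity), mul_comm, ← nsmul_eq_mul,
    Ring.factorial_nsmul_multichoose_eq_ascPochhammer, Polynomial.ascPochhammer_smeval_eq_eval,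
    risingFac_eq_ascPochhammer_eval]

lemma hasSum_risingFac_div_factorial_mul_pow (a : ℝ) {x : ℝ} (hx : |x| < 1) :
    HasSum (fun z : ℕ => risingFac a z / z.factorial * x ^ z) ((1 - x) ^ (-a)) := by
  have hx' : x ∈ Metric.eball 0 1 := by
    simpa [enorm_eq_nnnorm, ← NNReal.coe_lt_coe] using hx
  rw [Real.rpow_neg (by linarith [abs_lt.mp hx]), inv_eq_one_div]
  simpa only [FormalMultilinearSeries.ofScalars_apply_eq', zero_add, smul_eq_mul,
    ← risingFac_div_factorial] using
    (Real.one_div_one_sub_rpow_hasFPowerSeriesOnBall_zero a).hasSum (y := x) hx'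

lemma rpow_mul_one_sub_rpow_nonneg {x : ℝ} (a b : ℝ) (hx0 : 0 ≤ x) (hx1 : x ≤ 1) :
    0 ≤ x ^ a * (1 - x) ^ b :=
  mul_nonneg (Real.rpow_nonneg hx0 _) (Real.rpow_nonneg (sub_nonneg.2 hx1) _)

lemma betaFn_pos {a b : ℝ} (ha : 0 < a) (hb : 0 < b) : 0 < betaFn a b :=
  ProbabilityTheory.beta_pos ha hb

lemma lintegral_ofReal_rpow_mul_one_sub_rpow {a b : ℝ} (ha : 0 < a) (hb : 0 < b) :
    ∫⁻ x in Set.Ioo 0 1, ENNReal.ofReal (x ^ (a - 1) * (1 - x) ^ (b - 1)) =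
      ENNReal.ofReal (betaFn a b) := by
  have h := ProbabilityTheory.lintegral_betaPDF_eq_one ha hb
  rw [ProbabilityTheory.lintegral_betaPDF] at h
  have hB := betaFn_pos ha hb
  calc _ = ∫⁻ x in Set.Ioo 0 1, ENNReal.ofReal (betaFn a b) *
        ENNReal.ofReal (1 / betaFn a b * x ^ (a - 1) * (1 - x) ^ (b - 1)) := by
        refine setLIntegral_congr_fun measurableSet_Ioo fun x _ => ?_
        rw [← ENNReal.ofReal_mul hB.le]
        congr 1
        field_simp
    _ = ENNReal.ofReal (betaFn a b) * 1 := by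
        rw [lintegral_const_mul' _ _ ENNReal.ofReal_ne_top]
        exact congrArg _ h
    _ = _ := mul_one _

lemma integrableOn_rpow_mul_one_sub_rpow {a b : ℝ} (ha : 0 < a) (hb : 0 < b) :
    IntegrableOn (fun x : ℝ => x ^ (a - 1) * (1 - x) ^ (b - 1)) (Set.Ioo 0 1) := by
  refine (lintegral_ofReal_ne_top_iff_integrable (Measurable.aestronglyMeasurable (by fun_prop))
    (ae_restrict_of_forall_mem measurableSet_Ioo fun x hx => ?_)).mp ?_
  · exact rpow_mul_one_sub_rpow_nonneg _ _ hx.1.le hx.2.le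
  · rw [lintegral_ofReal_rpow_mul_one_sub_rpow ha hb]
    exact ENNReal.ofReal_ne_top

lemma integral_rpow_mul_one_sub_rpow {a b : ℝ} (ha : 0 < a) (hb : 0 < b) :
    ∫ x in Set.Ioo (0 : ℝ) 1, x ^ (a - 1) * (1 - x) ^ (b - 1) = betaFn a b := by
  rw [integral_eq_lintegral_of_nonneg_ae
    (ae_restrict_of_forall_mem measurableSet_Ioo fun x hx => ?_)
    (Measurable.aestronglyMeasurable (by fun_prop)), lintegral_ofReal_rpow_mul_one_sub_rpow ha hb,
    ENNReal.toReal_ofReal (betaFn_pos ha hb).le]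
  exact rpow_mul_one_sub_rpow_nonneg _ _ hx.1.le hx.2.le

theorem hasSum_integral_of_nonneg {Ω ι : Type*} [MeasurableSpace Ω] {μ : Measure Ω} [Countable ι]
    {F : ι → Ω → ℝ} {f : Ω → ℝ} (hF_meas : ∀ n, AEStronglyMeasurable (F n) μ)
    (hF_nonneg : ∀ n, 0 ≤ᵐ[μ] F n) (hf : Integrable f μ)
    (h_lim : ∀ᵐ ω ∂μ, HasSum (fun n => F n ω) (f ω)) :
    HasSum (fun n => ∫ ω, F n ω ∂μ) (∫ ω, f ω ∂μ) :=
  hasSum_integral_of_dominated_convergence F hF_meas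
    (fun n => (hF_nonneg n).mono fun _ hω => (Real.norm_of_nonneg hω).le)
    (h_lim.mono fun _ hω => hω.summable)
    (hf.congr (h_lim.mono fun _ hω => hω.tsum_eq.symm)) h_lim

section BetaMixture

variable {p c : ℝ}

lemma mul_lt_one_of_mem_Ioo (hp : p ∈ Set.Ioo 0 1) (hc1 : c ≤ 1) : p * c < 1 :=
  (mul_le_of_le_one_right hp.1.le hc1).trans_lt hp.2

lemma one_sub_div_one_sub_mul_rpow_le_one {r : ℝ} (hr : 0 ≤ r) (hp : p ∈ Set.Ioo 0 1)
    (hc1 : c ≤ 1) : ((1 - p) / (1 - p * c)) ^ r ≤ 1 := by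
  have hpc : 0 < 1 - p * c := sub_pos.2 (mul_lt_one_of_mem_Ioo hp hc1)
  refine Real.rpow_le_one (div_nonneg (sub_nonneg.2 hp.2.le) hpc.le) ?_ hr
  rw [div_le_one hpc]
  nlinarith [hp.1]

lemma hasSum_pow_mul_risingFac_mul_rpow (r a b : ℝ) (hp : p ∈ Set.Ioo 0 1) (hc0 : 0 ≤ c)
    (hc1 : c ≤ 1) :
    HasSum (fun z : ℕ => c ^ z * (risingFac r z / z.factorial) *
        (p ^ ((z : ℝ) + a - 1) * (1 - p) ^ (r + b - 1)))
      (((1 - p) / (1 - p * c)) ^ r * (p ^ (a - 1) * (1 - p) ^ (b - 1))) := by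
  have hp1 : 0 < 1 - p := sub_pos.2 hp.2
  have hpc : 0 < 1 - p * c := sub_pos.2 (mul_lt_one_of_mem_Ioo hp hc1)
  have h := (hasSum_risingFac_div_factorial_mul_pow r (x := p * c)
    (abs_lt.2 ⟨by nlinarith [hp.1], mul_lt_one_of_mem_Ioo hp hc1⟩)).mul_right
    (p ^ (a - 1) * (1 - p) ^ (r + b - 1))
  have hterm : ∀ z : ℕ, c ^ z * (risingFac r z / z.factorial) *
      (p ^ ((z : ℝ) + a - 1) * (1 - p) ^ (r + b - 1)) =
      risingFac r z / z.factorial * (p * c) ^ z * (p ^ (a - 1) * (1 - p) ^ (r + b - 1)) := by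
    intro z
    rw [add_sub_assoc, Real.rpow_add hp.1, Real.rpow_natCast, mul_pow]
    ring
  have hval : ((1 - p) / (1 - p * c)) ^ r * (p ^ (a - 1) * (1 - p) ^ (b - 1)) =
      (1 - p * c) ^ (-r) * (p ^ (a - 1) * (1 - p) ^ (r + b - 1)) := by
    rw [Real.div_rpow hp1.le hpc.le, add_sub_assoc, Real.rpow_add hp1, Real.rpow_neg hpc.le]
    ring
  rw [funext hterm, hval]
  exact h

end BetaMixture

lemma integrableOn_one_sub_div_one_sub_mul_rpow_mul {r α β c : ℝ} (hr : 0 ≤ r) (hα : 0 < α)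
    (hβ : 0 < β) (hc1 : c ≤ 1) :
    IntegrableOn (fun p : ℝ => ((1 - p) / (1 - p * c)) ^ r * (p ^ (α - 1) * (1 - p) ^ (β - 1)))
      (Set.Ioo 0 1) := by
  refine (integrableOn_rpow_mul_one_sub_rpow hα hβ).mono'
    (Measurable.aestronglyMeasurable (by fun_prop))
    (ae_restrict_of_forall_mem measurableSet_Ioo fun p hp => ?_)
  have hkernel := rpow_mul_one_sub_rpow_nonneg (α - 1) (β - 1) hp.1.le hp.2.le
  have hratio : 0 ≤ (1 - p) / (1 - p * c) :=
    div_nonneg (sub_nonneg.2 hp.2.le) (sub_pos.2 (mul_lt_one_of_mem_Ioo hp hc1)).le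
  rw [Real.norm_of_nonneg (mul_nonneg (Real.rpow_nonneg hratio _) hkernel)]
  exact mul_le_of_le_one_left hkernel (one_sub_div_one_sub_mul_rpow_le_one hr hp hc1)

theorem hasSum_exp_mul_risingFac_mul_betaFn {r α β t : ℝ} (hr : 0 < r) (hα : 0 < α) (hβ : 0 < β)
    (ht : 0 ≤ t) :
    HasSum (fun z : ℕ => Real.exp (-t * z) * (risingFac r z / z.factorial) *
        betaFn (z + α) (r + β))
      (∫ p in Set.Ioo (0 : ℝ) 1,
        ((1 - p) / (1 - p * Real.exp (-t))) ^ r * (p ^ (α - 1) * (1 - p) ^ (β - 1))) := by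
  have hc0 : 0 ≤ Real.exp (-t) := (Real.exp_pos _).le
  have hc1 : Real.exp (-t) ≤ 1 := Real.exp_le_one_iff.2 (neg_nonpos.2 ht)
  have h := hasSum_integral_of_nonneg
    (F := fun (z : ℕ) (p : ℝ) => Real.exp (-t) ^ z * (risingFac r z / z.factorial) *
      (p ^ ((z : ℝ) + α - 1) * (1 - p) ^ (r + β - 1)))
    (fun _ => Measurable.aestronglyMeasurable (by fun_prop))
    (fun z => ae_restrict_of_forall_mem measurableSet_Ioo fun p hp => ?_)
    (integrableOn_one_sub_div_one_sub_mul_rpow_mul hr.le hα hβ hc1)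
    (ae_restrict_of_forall_mem measurableSet_Ioo fun p hp =>
      hasSum_pow_mul_risingFac_mul_rpow r α β hp hc0 hc1)
  · convert h using 2 with z
    rw [integral_const_mul, integral_rpow_mul_one_sub_rpow (by positivity) (by positivity),
      mul_comm (-t), Real.exp_nat_mul]
  · exact mul_nonneg (mul_nonneg (pow_nonneg hc0 z)
      (div_nonneg (risingFac_nonneg hr.le z) (Nat.cast_nonneg _)))
      (rpow_mul_one_sub_rpow_nonneg _ _ hp.1.le hp.2.le)

theorem stmt_17 (r α β t : ℝ) (hr : 0 < r) (hα : 0 < α) (hβ : 0 < β) (ht : 0 ≤ t) :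
    HasSum (fun z : ℕ => Real.exp (-t * z) * BNBpmf r α β z)
      (∫ p in Set.Ioo (0 : ℝ) 1,
        ((1 - p) / (1 - p * Real.exp (-t))) ^ r *
          (p ^ (α - 1) * (1 - p) ^ (β - 1) / betaFn α β)) := by
  have h := (hasSum_exp_mul_risingFac_mul_betaFn hr hα hβ ht).div_const (betaFn α β)
  have hterm (z : ℕ) : Real.exp (-t * z) * BNBpmf r α β z =
      Real.exp (-t * z) * (risingFac r z / z.factorial) * betaFn (z + α) (r + β) / betaFn α β := by
    rw [BNBpmf]
    ring
  have hdensity (p : ℝ) : ((1 - p) / (1 - p * Real.exp (-t))) ^ r *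
      (p ^ (α - 1) * (1 - p) ^ (β - 1) / betaFn α β) =
      ((1 - p) / (1 - p * Real.exp (-t))) ^ r * (p ^ (α - 1) * (1 - p) ^ (β - 1)) / betaFn α β :=
    (mul_div_assoc _ _ _).symm
  rw [← integral_div] at h
  simpa only [hterm, hdensity] using h
end
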